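/- arXiv:1912.09897 — 4 statements merged into one kernel-verified Lean document; each statement's English description precedes it below -/
import Mathlib

section
/- Let A, B : [x_0, ∞) → ℝ be convex functions, with B differentiable and satisfying B'(x+1) = B'(x) + O(1) as x → ∞. Suppose there is an increasing sequence (x_k) with x_k → ∞, x_{k+1} = x_k + O(1), and A(x_k) = B(x_k) + O(1) as k → ∞. Then A(x) = B(x) + O(1) as x → ∞. -/
/-!
On a gap `[p, q]` between consecutive sample points, a convex function lies below its chord and
above its support lines at `p` and `q`, and the chord exceeds the function by at most `(q - p)²`
times the increase of the support slopes. For `B` these slopes are `B'(p) ≤ B'(q)`. For `A` use the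
secant slopes over sample points at distance at least `1` to the left of `p` and to the right of
`q`: since `A - B = O(1)` at sample points, these lie within `O(1)` of `B'` there. Because the
gaps are bounded, all these points lie in a window of bounded length, over which `B'` grows by
`O(1)`. Comparing each function with the chord of the other gives `|A - B| = O(1)` on the gap.
-/

open Filter Set

section Convex

variable {s : Set ℝ} {f : ℝ → ℝ} {p q t : ℝ}

theorem ConvexOn.sub_mul_le_secant (hf : ConvexOn ℝ s f) (hp : p ∈ s) (hq : q ∈ s)
    (hpt : p ≤ t) (htq : t ≤ q) : (q - p) * f t ≤ (q - t) * f p + (t - p) * f q := by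
  obtain rfl | hpt := hpt.eq_or_lt
  · linarith
  obtain rfl | htq := htq.eq_or_lt
  · linarith
  exact hf.secant_mono_aux1 hp hq hpt htq

theorem ConvexOn.add_slope_mul_le_of_lt_of_le {y z : ℝ} (hf : ConvexOn ℝ s f) (hz : z ∈ s)
    (ht : t ∈ s) (hzy : z < y) (hyt : y ≤ t) : f y + slope f z y * (t - y) ≤ f t := by
  obtain rfl | hyt := hyt.eq_or_lt
  · simp
  have h := (le_div_iff₀ (sub_pos.2 hyt)).1 (hf.slope_mono_adjacent hz ht hzy hyt)
  rw [slope_def_field]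
  linarith

theorem ConvexOn.add_slope_mul_le_of_le_of_lt {y z : ℝ} (hf : ConvexOn ℝ s f) (ht : t ∈ s)
    (hz : z ∈ s) (hty : t ≤ y) (hyz : y < z) : f y + slope f y z * (t - y) ≤ f t := by
  obtain rfl | hty := hty.eq_or_lt
  · simp
  have h := (div_le_iff₀ (sub_pos.2 hty)).1 (hf.slope_mono_adjacent ht hz hty hyz)
  rw [slope_def_field]
  linarith

theorem ConvexOn.add_deriv_mul_le {x : ℝ} (hf : ConvexOn ℝ s f) (hx : x ∈ s) (ht : t ∈ s)
    (hd : DifferentiableAt ℝ f x) : f x + deriv f x * (t - x) ≤ f t := by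
  rcases lt_trichotomy x t with hxt | rfl | htx
  · have h := hf.deriv_le_slope hx ht hxt hd
    rw [slope_def_field, le_div_iff₀ (sub_pos.2 hxt)] at h
    linarith
  · simp
  · have h := hf.slope_le_deriv ht hx htx hd
    rw [slope_def_field, div_le_iff₀ (sub_pos.2 htx)] at h
    linarith

end Convex

theorem chord_sub_le_of_support {f : ℝ → ℝ} {p q t a b K : ℝ} (hpt : p ≤ t) (htq : t ≤ q)
    (hp : f p + a * (t - p) ≤ f t) (hq : f q + b * (t - q) ≤ f t) (hab : b - a ≤ K)
    (hK : 0 ≤ K) : (q - t) * f p + (t - p) * f q - (q - p) * f t ≤ (q - p) ^ 2 * K := by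
  have hp' := mul_le_mul_of_nonneg_left hp (sub_nonneg.2 htq)
  have hq' := mul_le_mul_of_nonneg_left hq (sub_nonneg.2 hpt)
  have hab' := mul_le_mul_of_nonneg_left hab (mul_nonneg (sub_nonneg.2 htq) (sub_nonneg.2 hpt))
  have hw : (q - t) * (t - p) * K ≤ (q - p) ^ 2 * K :=
    mul_le_mul_of_nonneg_right (by nlinarith) hK
  linarith

theorem sub_two_mul_le_slope {A B : ℝ → ℝ} {u p d C : ℝ} (hup : u + 1 ≤ p)
    (hB : B u + d * (p - u) ≤ B p) (hu : |A u - B u| ≤ C) (hp : |A p - B p| ≤ C) :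
    d - 2 * C ≤ slope A u p := by
  rw [slope_def_field, le_div_iff₀ (by linarith)]
  have hC := mul_nonneg ((abs_nonneg _).trans hu) (by linarith : 0 ≤ p - u - 1)
  linarith [abs_le.1 hu, abs_le.1 hp]

theorem slope_le_add_two_mul {A B : ℝ → ℝ} {q v d C : ℝ} (hqv : q + 1 ≤ v)
    (hB : B v + d * (q - v) ≤ B q) (hq : |A q - B q| ≤ C) (hv : |A v - B v| ≤ C) :
    slope A q v ≤ d + 2 * C := by
  rw [slope_def_field, div_le_iff₀ (by linarith)]
  have hC := mul_nonneg ((abs_nonneg _).trans hq) (by linarith : 0 ≤ v - q - 1)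
  linarith [abs_le.1 hq, abs_le.1 hv]

theorem abs_sub_le_of_bracket {x0 C u p t q v : ℝ} {A B : ℝ → ℝ}
    (hA : ConvexOn ℝ (Ici x0) A) (hB : ConvexOn ℝ (Ici x0) B)
    (hBdiff : ∀ x ∈ Ici x0, DifferentiableAt ℝ B x) (hu : x0 ≤ u)
    (hup : u + 1 ≤ p) (hpt : p ≤ t) (htq : t < q) (hqv : q + 1 ≤ v)
    (hABu : |A u - B u| ≤ C) (hABp : |A p - B p| ≤ C) (hABq : |A q - B q| ≤ C)
    (hABv : |A v - B v| ≤ C) :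
    |A t - B t| ≤ C + (q - p) * (deriv B v - deriv B u + 4 * C) := by
  have mem : ∀ y, u ≤ y → y ∈ Ici x0 := fun y hy => hu.trans hy
  have hu' := mem u le_rfl
  have hp' := mem p (by linarith)
  have ht' := mem t (by linarith)
  have hq' := mem q (by linarith)
  have hv' := mem v (by linarith)
  set K := deriv B v - deriv B u + 4 * C
  have hC : 0 ≤ C := (abs_nonneg _).trans hABu
  have hD := hB.monotoneOn_deriv hBdiff
  have hDup : deriv B u ≤ deriv B p := hD hu' hp' (by linarith)
  have hDqv : deriv B q ≤ deriv B v := hD hq' hv' (by linarith)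
  have hK : 0 ≤ K := by linarith [hD hp' hq' (by linarith)]
  have hBgap := chord_sub_le_of_support hpt htq.le (hB.add_deriv_mul_le hp' ht' (hBdiff p hp'))
    (hB.add_deriv_mul_le hq' ht' (hBdiff q hq')) (by linarith) hK
  have hAgap := chord_sub_le_of_support hpt htq.le
    (hA.add_slope_mul_le_of_lt_of_le hu' ht' (by linarith) hpt)
    (hA.add_slope_mul_le_of_le_of_lt ht' hv' htq.le (by linarith))
    (by linarith [sub_two_mul_le_slope hup (hB.add_deriv_mul_le hu' hp' (hBdiff u hu')) hABu hABp,
      slope_le_add_two_mul hqv (hB.add_deriv_mul_le hv' hq' (hBdiff v hv')) hABq hABv]) hK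
  have hAsec := hA.sub_mul_le_secant hp' hq' hpt htq.le
  have hBsec := hB.sub_mul_le_secant hp' hq' hpt htq.le
  have hpq : 0 < q - p := by linarith
  have hupper : (q - p) * (A t - B t) ≤ (q - p) * (C + (q - p) * K) := by
    linarith [mul_le_mul_of_nonneg_left (abs_le.1 hABp).2 (by linarith : 0 ≤ q - t),
      mul_le_mul_of_nonneg_left (abs_le.1 hABq).2 (by linarith : 0 ≤ t - p)]
  have hlower : (q - p) * (B t - A t) ≤ (q - p) * (C + (q - p) * K) := by
    linarith [mul_le_mul_of_nonneg_left (abs_le.1 hABp).1 (by linarith : 0 ≤ q - t),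
      mul_le_mul_of_nonneg_left (abs_le.1 hABq).1 (by linarith : 0 ≤ t - p)]
  exact abs_le.2 ⟨by linarith [le_of_mul_le_mul_left hlower hpq], le_of_mul_le_mul_left hupper hpq⟩

theorem Filter.Tendsto.exists_le_lt_succ {α : Type*} [LinearOrder α] [NoMaxOrder α] {x : ℕ → α}
    (hx : Tendsto x atTop atTop) {y : α} (hy : x 0 ≤ y) : ∃ j, x j ≤ y ∧ y < x (j + 1) := by
  classical
  have hex : ∃ i, y < x i := (hx.eventually_gt_atTop y).exists
  obtain ⟨j, hj⟩ := Nat.exists_eq_add_one_of_ne_zero (n := Nat.find hex) fun h =>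
    (h ▸ Nat.find_spec hex).not_ge hy
  exact ⟨j, not_lt.1 (Nat.find_min hex (by omega)), hj ▸ Nat.find_spec hex⟩

theorem eventually_exists_bracket {x : ℕ → ℝ} (hx : Tendsto x atTop atTop) {C : ℝ}
    (hstep : ∀ k, x (k + 1) - x k ≤ C) :
    ∀ᶠ t in atTop, ∃ i j m, x i + 1 ≤ x j ∧ x j ≤ t ∧ t < x (j + 1) ∧
      x (j + 1) + 1 ≤ x m ∧ x m - x i ≤ 3 * C + 2 := by
  filter_upwards [eventually_ge_atTop (x 0), eventually_ge_atTop (x 0 + 1 + C)] with t ht₀ ht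
  obtain ⟨j, hjt, htj⟩ := hx.exists_le_lt_succ ht₀
  have hj := hstep j
  obtain ⟨i, hi, hi'⟩ := hx.exists_le_lt_succ (y := x j - 1) (by linarith)
  obtain ⟨m, hm, hm'⟩ := hx.exists_le_lt_succ (y := x (j + 1) + 1) (by linarith)
  exact ⟨i, j, m + 1, by linarith, hjt, htj, hm'.le, by linarith [hstep i, hstep m]⟩

theorem MonotoneOn.sub_le_mul_of_add_one_le {g : ℝ → ℝ} {T C : ℝ} (hg : MonotoneOn g (Ici T))
    (hstep : ∀ a, T ≤ a → g (a + 1) ≤ g a + C) {a b : ℝ} {n : ℕ} (ha : T ≤ a) (hab : a ≤ b)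
    (hb : b ≤ a + n) : g b - g a ≤ n * C := by
  have hgrow : ∀ k : ℕ, g (a + k) ≤ g a + k * C := by
    intro k
    induction k with
    | zero => simp
    | succ k ih =>
      have h := hstep (a + k) (by linarith [k.cast_nonneg (α := ℝ)])
      push_cast
      rw [← add_assoc]
      linarith
  have hn : T ≤ a + n := by linarith [n.cast_nonneg (α := ℝ)]
  linarith [hg (ha.trans hab) hn hb, hgrow n]

theorem convex_compare_O1_general (x0 : ℝ) (A B : ℝ → ℝ)
    (hA : ConvexOn ℝ (Set.Ici x0) A) (hB : ConvexOn ℝ (Set.Ici x0) B)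
    (hBdiff : ∀ x ∈ Set.Ici x0, DifferentiableAt ℝ B x)
    (C1 : ℝ) (hC1 : ∀ᶠ x in atTop, |deriv B (x + 1) - deriv B x| ≤ C1)
    (x : ℕ → ℝ) (hx : Tendsto x atTop atTop)
    (C2 : ℝ) (hstep : ∀ k, x (k + 1) - x k ≤ C2)
    (C3 : ℝ) (hAB : ∀ᶠ k in atTop, |A (x k) - B (x k)| ≤ C3) :
    ∃ C : ℝ, ∀ᶠ t in atTop, |A t - B t| ≤ C := by
  obtain ⟨T, hT⟩ := eventually_atTop.1 hC1
  obtain ⟨N, hN⟩ := eventually_atTop.1 (hAB.and (hx.eventually_ge_atTop (max x0 T)))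
  set y : ℕ → ℝ := fun k => x (k + N)
  have hy : Tendsto y atTop atTop := hx.comp (tendsto_add_atTop_nat N)
  have hyN : ∀ k, |A (y k) - B (y k)| ≤ C3 ∧ max x0 T ≤ y k := fun k => hN _ (Nat.le_add_left N k)
  have hystep : ∀ k, y (k + 1) - y k ≤ C2 := fun k => by
    simpa only [y, Nat.add_right_comm] using hstep (k + N)
  have hderiv : MonotoneOn (deriv B) (Ici (max x0 T)) :=
    (hB.monotoneOn_deriv hBdiff).mono (Ici_subset_Ici.2 (le_max_left _ _))
  set n := ⌈3 * C2 + 2⌉₊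
  refine ⟨C3 + C2 * (n * C1 + 4 * C3), ?_⟩
  filter_upwards [eventually_exists_bracket hy hystep] with t ⟨i, j, m, hij, hjt, htj, hjm, him⟩
  have hDim : deriv B (y m) - deriv B (y i) ≤ n * C1 :=
    hderiv.sub_le_mul_of_add_one_le
      (fun a ha => by linarith [(abs_le.1 (hT a (le_of_max_le_right ha))).2])
      (hyN i).2 (by linarith) (by linarith [Nat.le_ceil (3 * C2 + 2)])
  calc |A t - B t| ≤ C3 + (y (j + 1) - y j) * (deriv B (y m) - deriv B (y i) + 4 * C3) :=
        abs_sub_le_of_bracket hA hB hBdiff ((le_max_left _ _).trans (hyN i).2) hij hjt htj hjm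
          (hyN i).1 (hyN j).1 (hyN (j + 1)).1 (hyN m).1
    _ ≤ C3 + C2 * (n * C1 + 4 * C3) := by
        have hK : 0 ≤ deriv B (y m) - deriv B (y i) + 4 * C3 := by
          linarith [hderiv (hyN i).2 (hyN m).2 (by linarith), (abs_nonneg _).trans (hyN 0).1]
        have hKn : deriv B (y m) - deriv B (y i) + 4 * C3 ≤ n * C1 + 4 * C3 := by linarith
        linarith [mul_le_mul (hystep j) hKn hK (by linarith [hystep j])]

/-- If `A`, `B` are convex on `[x₀,∞)`, `B` is differentiable with `B'(x+1) = B'(x) + O(1)`,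
and `A(x_k) = B(x_k) + O(1)` along an increasing sequence `x_k → ∞` with bounded gaps,
then `A(x) = B(x) + O(1)` as `x → ∞`. -/
theorem convex_compare_O1 (x0 : ℝ) (A B : ℝ → ℝ)
    (hA : ConvexOn ℝ (Set.Ici x0) A) (hB : ConvexOn ℝ (Set.Ici x0) B)
    (hBdiff : ∀ x ∈ Set.Ici x0, DifferentiableAt ℝ B x)
    (C1 : ℝ) (hC1 : ∀ᶠ x in atTop, |deriv B (x + 1) - deriv B x| ≤ C1)
    (x : ℕ → ℝ) (hx0 : ∀ k, x k ∈ Set.Ici x0)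
    (hmono : StrictMono x) (hx : Tendsto x atTop atTop)
    (C2 : ℝ) (hstep : ∀ k, x (k + 1) - x k ≤ C2)
    (C3 : ℝ) (hAB : ∀ᶠ k in atTop, |A (x k) - B (x k)| ≤ C3) :
    ∃ C : ℝ, ∀ᶠ t in atTop, |A t - B t| ≤ C :=
  convex_compare_O1_general x0 A B hA hB hBdiff C1 hC1 x hx C2 hstep C3 hAB
end

section
/- Let 0 < τ < 1 and d ≥ 2, and consider the difference equation ∑_{j=0}^d b_j(n) y(n−j) = 0 with b_j(n) = a_j + O(τⁿ), where a_0 = a_d = 0, a_1 = −1. Then there exist coefficient functions b_j(n) of this form (e.g. b_0(n) = b_2(n) = 2^{−2n−1}, b_1(n) = −(1 + 2^{−4n}) with d = 2) admitting a solution y(n) = 2^{(n+1)²} for which limsup_{n→∞} (log|y(n)|)/n = +∞. -/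
/-!
For `y n = x ^ (n + 1) ^ 2` one has `x ^ (-(2n+1)) y(n) = y(n-1)` and
`x ^ (-(2n+1)) y(n-2) = x ^ (-4n) y(n-1)`, so the coefficients `x ^ (-(2n+1))`,
`-(1 + x ^ (-4n))`, `x ^ (-(2n+1))` annihilate `y`. Taking `x = 2`, they converge
exponentially fast to `0, -1, 0`, while `log y(n) / n ≥ n log 2` is unbounded.
-/

open Filter Finset

theorem pow_sq_three_term_recurrence {K : Type*} [Field K] {x : K} (hx : x ≠ 0) (m : ℕ) :
    (x ^ (2 * m + 5))⁻¹ * x ^ (m + 3) ^ 2 - (1 + (x ^ (4 * m + 8))⁻¹) * x ^ (m + 2) ^ 2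
      + (x ^ (2 * m + 5))⁻¹ * x ^ (m + 1) ^ 2 = 0 := by
  have hfirst : (x ^ (2 * m + 5))⁻¹ * x ^ (m + 3) ^ 2 = x ^ (m + 2) ^ 2 := by
    rw [show (m + 3) ^ 2 = (2 * m + 5) + (m + 2) ^ 2 by ring, pow_add x (2 * m + 5),
      inv_mul_cancel_left₀ (pow_ne_zero _ hx)]
  have hthird : (x ^ (2 * m + 5))⁻¹ * x ^ (m + 1) ^ 2
      = (x ^ (4 * m + 8))⁻¹ * x ^ (m + 2) ^ 2 := by
    have h : x ^ (m + 1) ^ 2 * x ^ (4 * m + 8) = x ^ (m + 2) ^ 2 * x ^ (2 * m + 5) := by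
      rw [← pow_add, ← pow_add]
      ring_nf
    field_simp
    linear_combination h
  rw [hfirst, hthird]
  ring

theorem tendsto_log_pow_succ_sq_div_atTop {x : ℝ} (hx : 1 < x) :
    Tendsto (fun n : ℕ => Real.log (x ^ (n + 1) ^ 2) / n) atTop atTop := by
  have hlog : 0 < Real.log x := Real.log_pos hx
  refine tendsto_atTop_mono' atTop ?_
    (tendsto_natCast_atTop_atTop.atTop_mul_const hlog)
  filter_upwards [eventually_ge_atTop 1] with n hn
  have hn' : (1 : ℝ) ≤ n := by exact_mod_cast hn
  rw [Real.log_pow, le_div_iff₀ (by linarith)]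
  push_cast
  nlinarith

def degenerateLimitCoeff : ℕ → ℝ
  | 1 => -1
  | _ => 0

noncomputable def degenerateCoeff : ℕ → ℕ → ℝ
  | 1, n => -(1 + (2 ^ (4 * n))⁻¹)
  | 0, n | 2, n => (2 ^ (2 * n + 1))⁻¹
  | _, _ => 0

theorem abs_degenerateCoeff_sub_le (j n : ℕ) :
    |degenerateCoeff j n - degenerateLimitCoeff j| ≤ (2 ^ n)⁻¹ := by
  have key : ∀ k, n ≤ k → |((2 : ℝ) ^ k)⁻¹| ≤ (2 ^ n)⁻¹ := fun k hk => by
    rw [abs_of_pos (by positivity)]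
    exact inv_anti₀ (by positivity) (pow_le_pow_right₀ one_le_two hk)
  match j with
  | 0 => simpa [degenerateCoeff, degenerateLimitCoeff] using key _ (by omega)
  | 1 => simpa [degenerateCoeff, degenerateLimitCoeff] using key (4 * n) (by omega)
  | 2 => simpa [degenerateCoeff, degenerateLimitCoeff] using key _ (by omega)
  | j + 3 => simp [degenerateCoeff, degenerateLimitCoeff]

/-- If the extreme limit coefficients vanish, a Poincaré–Perron type recurrence with
exponentially converging coefficients may admit a solution growing like `2^{(n+1)²}`,
so that `(log |y(n)|)/n → ∞`. -/
theorem degenerate_recurrence_fast_solution :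
    ∃ (d : ℕ) (τ : ℝ) (a : ℕ → ℝ) (b : ℕ → ℕ → ℝ) (C : ℝ) (y : ℕ → ℝ),
      2 ≤ d ∧ 0 < τ ∧ τ < 1 ∧
      a 0 = 0 ∧ a d = 0 ∧ a 1 = -1 ∧
      (∀ j ≤ d, ∀ n : ℕ, |b j n - a j| ≤ C * τ ^ n) ∧
      (∀ n : ℕ, y n = 2 ^ ((n + 1) ^ 2)) ∧
      (∀ n : ℕ, d ≤ n → ∑ j ∈ Finset.range (d + 1), b j n * y (n - j) = 0) ∧
      Tendsto (fun n : ℕ => Real.log (y n) / (n : ℝ)) atTop atTop := by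
  refine ⟨2, 1 / 2, degenerateLimitCoeff, degenerateCoeff, 1, fun n => 2 ^ ((n + 1) ^ 2),
    le_rfl, by norm_num, by norm_num, rfl, rfl, rfl,
    fun j _ n => by simpa using abs_degenerateCoeff_sub_le j n, fun _ => rfl, ?_,
    tendsto_log_pow_succ_sq_div_atTop one_lt_two⟩
  intro n hn
  obtain ⟨m, rfl⟩ := Nat.exists_eq_add_of_le' hn
  simp only [sum_range_succ, sum_range_zero, degenerateCoeff, zero_add, Nat.sub_zero,
    show m + 2 - 1 = m + 1 by omega, show m + 2 - 2 = m by omega,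
    show 2 * (m + 2) + 1 = 2 * m + 5 by ring, show 4 * (m + 2) = 4 * m + 8 by ring]
  linear_combination pow_sq_three_term_recurrence (two_ne_zero (α := ℝ)) m
end

section
/- Let 0 < p < 1 and f(z) = p ∑_{n=0}^∞ ρ^{2n²}(n+1) zⁿ where ρ² = p. Then f is entire and satisfies f(z) − 2ρ²z f(qz) + q²z² f(q²z) = p for all z, where q = p² = ρ⁴. -/
/-!
Comparing coefficients of `zⁿ⁺²` turns the functional equation into the three-term recurrence
`b (n+2) - 2ρ² qⁿ⁺¹ b (n+1) + q² q²ⁿ b n = 0` for `b n = ρ^{2n²}(n+1)`; after pulling out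
`ρ^{2n²+8n+8}` it reads `(n+3) - 2(n+2) + (n+1) = 0`. The coefficients of `1` and `z` leave `p`.
Since the series converges at every point, its radius of convergence is infinite.
-/

open FormalMultilinearSeries Filter Topology

theorem ofScalars_radius_eq_top_of_forall_summable {𝕜 : Type*} [NontriviallyNormedField 𝕜]
    {a : ℕ → 𝕜} (ha : ∀ z : 𝕜, Summable fun n => a n * z ^ n) :
    (ofScalars 𝕜 a).radius = ⊤ := by
  refine ENNReal.eq_top_of_forall_nnreal_le fun r => ?_
  obtain ⟨z, hz⟩ := NormedField.exists_lt_norm 𝕜 r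
  have hlim : Tendsto (fun n => ‖ofScalars 𝕜 a n‖ * (‖z‖₊ : ℝ) ^ n) atTop (𝓝 0) := by
    simpa [ofScalars_norm, norm_mul, norm_pow] using (ha z).tendsto_atTop_zero.norm
  calc (r : ENNReal) ≤ ‖z‖₊ := by exact_mod_cast hz.le
    _ ≤ _ := le_radius_of_tendsto _ hlim

theorem differentiable_of_forall_hasSum_pow {𝕜 : Type*} [NontriviallyNormedField 𝕜]
    [CompleteSpace 𝕜] {a : ℕ → 𝕜} {f : 𝕜 → 𝕜}
    (hf : ∀ z, HasSum (fun n => a n * z ^ n) (f z)) : Differentiable 𝕜 f := by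
  have hrad := ofScalars_radius_eq_top_of_forall_summable fun z => (hf z).summable
  have hsum : f = ofScalarsSum a := funext fun z => by
    simp [ofScalars_sum_eq, (hf z).tsum_eq]
  have hball := (ofScalars 𝕜 a).hasFPowerSeriesOnBall (hrad ▸ ENNReal.zero_lt_top)
  intro z
  rw [hsum]
  exact (hball.analyticAt_of_mem (by simp [hrad])).differentiableAt

theorem qDifference_eq_of_recurrence {𝕜 : Type*} [NormedField 𝕜] {a : ℕ → 𝕜} {f : 𝕜 → 𝕜}
    (hf : ∀ z, HasSum (fun n => a n * z ^ n) (f z)) (c₁ c₂ q : 𝕜)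
    (hrec : ∀ n, a (n + 2) + c₁ * q ^ (n + 1) * a (n + 1) + c₂ * (q ^ 2) ^ n * a n = 0) (z : 𝕜) :
    f z + c₁ * z * f (q * z) + c₂ * z ^ 2 * f (q ^ 2 * z) = a 0 + (a 1 + c₁ * a 0) * z := by
  have h₀ := (hasSum_nat_add_iff' 2).mpr (hf z)
  have h₁ := ((hasSum_nat_add_iff' 1).mpr (hf (q * z))).mul_left (c₁ * z)
  have h₂ := (hf (q ^ 2 * z)).mul_left (c₂ * z ^ 2)
  have hterms (n : ℕ) : a (n + 2) * z ^ (n + 2) + c₁ * z * (a (n + 1) * (q * z) ^ (n + 1))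
      + c₂ * z ^ 2 * (a n * (q ^ 2 * z) ^ n) = 0 := by
    linear_combination z ^ (n + 2) * hrec n
  have hsum := (h₀.add h₁).add h₂
  simp only [hterms] at hsum
  have htail := hsum.unique hasSum_zero
  simp only [Finset.sum_range_succ, Finset.sum_range_zero] at htail
  linear_combination htail

def doubleRootCoeff {R : Type*} [CommRing R] (ρ : R) (n : ℕ) : R := ρ ^ (2 * n ^ 2) * (n + 1)

theorem doubleRootCoeff_recurrence {R : Type*} [CommRing R] (ρ : R) (n : ℕ) :
    doubleRootCoeff ρ (n + 2) - 2 * ρ ^ 2 * (ρ ^ 4) ^ (n + 1) * doubleRootCoeff ρ (n + 1)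
      + (ρ ^ 4) ^ 2 * ((ρ ^ 4) ^ 2) ^ n * doubleRootCoeff ρ n = 0 := by
  simp only [doubleRootCoeff]
  push_cast
  ring

theorem entire_solution_double_root_general (p ρ q : ℝ)
    (hρp : ρ ^ 2 = p) (hq : q = p ^ 2)
    (f : ℂ → ℂ)
    (hf : ∀ z : ℂ, HasSum (fun n : ℕ => (p : ℂ) * ((ρ : ℂ) ^ (2 * n ^ 2) * (n + 1)) * z ^ n) (f z)) :
    Differentiable ℂ f ∧
    ∀ z : ℂ, f z - 2 * (ρ : ℂ) ^ 2 * z * f ((q : ℂ) * z) +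
      (q : ℂ) ^ 2 * z ^ 2 * f ((q : ℂ) ^ 2 * z) = (p : ℂ) := by
  have hp : (p : ℂ) = (ρ : ℂ) ^ 2 := by exact_mod_cast hρp.symm
  have hq' : (q : ℂ) = (ρ : ℂ) ^ 4 := by rw [hq, ← hρp]; push_cast; ring
  refine ⟨differentiable_of_forall_hasSum_pow hf, fun z => ?_⟩
  have key := qDifference_eq_of_recurrence (a := fun n => (p : ℂ) * doubleRootCoeff (ρ : ℂ) n) hf
    (-2 * (ρ : ℂ) ^ 2) ((q : ℂ) ^ 2) q (fun n => by
      rw [hq']; linear_combination (p : ℂ) * doubleRootCoeff_recurrence (ρ : ℂ) n) z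
  simp only [doubleRootCoeff, hp] at key
  linear_combination key - hp

/-- The entire function `f(z) = p ∑ ρ^{2n²}(n+1) zⁿ` with `ρ² = p`, `q = p²`,
satisfies `f(z) − 2ρ²z f(qz) + q²z² f(q²z) = p`. -/
theorem entire_solution_double_root (p ρ q : ℝ) (hp0 : 0 < p) (hp1 : p < 1)
    (hρ : 0 < ρ) (hρp : ρ ^ 2 = p) (hq : q = p ^ 2)
    (f : ℂ → ℂ)
    (hf : ∀ z : ℂ, HasSum (fun n : ℕ => (p : ℂ) * ((ρ : ℂ) ^ (2 * n ^ 2) * (n + 1)) * z ^ n) (f z)) :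
    Differentiable ℂ f ∧
    ∀ z : ℂ, f z - 2 * (ρ : ℂ) ^ 2 * z * f ((q : ℂ) * z) +
      (q : ℂ) ^ 2 * z ^ 2 * f ((q : ℂ) ^ 2 * z) = (p : ℂ) :=
  entire_solution_double_root_general p ρ q hρp hq f hf
end

section
/- Let (a_n) be a sequence in {|z| > 1} with |a_n| ≤ |a_{n+1}|, a_n → ∞, and |a_{n+N}| ≥ K|a_n| for some K > 1, N ∈ ℕ. Then for every r > 1 and every z with r/K < |z| ≤ Kr: (i) |∑_{|a_j| > K²r} z/(z − a_j)| ≤ ∑_{n=1}^∞ 4N/(K^{4n−3} − 1), and (ii) |∑_{|a_j| ≤ K^{−2}r} z/(z − a_j) − n(K^{−2}r)| ≤ ∑_{n=1}^∞ 4N/(K^{4n−3} − 1), where n(s) denotes the number of indices j with |a_j| ≤ s. -/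
/-!
Since `‖a‖` is monotone and `K ‖a n‖ ≤ ‖a (n + N)‖`, every annulus `s < |w| ≤ K s` contains at
most `N` of the points `a j`, hence every annulus of ratio `K⁴` at most `4N`. Cut the region
`|w| > K² r` into the annuli `K^(4n+2) r < |w| ≤ K^(4n+6) r` and the region `|w| ≤ r / K²` into
`r / K^(4n+6) < |w| ≤ r / K^(4n+2)`. On the `n`-th annulus `|z / (z - a j)|`, respectively
`|z / (z - a j) - 1| = |a j / (z - a j)|`, is at most `1 / (K^(4n+1) - 1)`, because one of
`|z|`, `|a j|` exceeds the other by the factor `K^(4n+1)`.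
-/

open Filter Finset

theorem summable_one_div_pow_sub_one {q : ℝ} (hq : 1 < q) :
    Summable fun n : ℕ => 1 / (q ^ n - 1) := by
  have hq0 : 0 < q := one_pos.trans hq
  refine Summable.of_nonneg_of_le
    (fun n => one_div_nonneg.mpr (sub_nonneg.mpr (one_le_pow₀ hq.le))) (fun n => ?_)
    ((summable_geometric_of_lt_one (by positivity) (inv_lt_one_of_one_lt₀ hq)).mul_left
      (q / (q - 1)))
  rcases n with _ | k
  · simp only [pow_zero, sub_self, div_zero, mul_one]
    exact div_nonneg hq0.le (by linarith)
  · have hk : 1 ≤ q ^ k := one_le_pow₀ hq.le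
    calc 1 / (q ^ (k + 1) - 1) ≤ 1 / ((q - 1) * q ^ k) :=
          one_div_le_one_div_of_le (mul_pos (by linarith) (by positivity))
            (by rw [pow_succ]; nlinarith)
      _ = q / (q - 1) * q⁻¹ ^ (k + 1) := by
          rw [inv_pow, pow_succ']
          field_simp

theorem norm_div_sub_le {𝕜 : Type*} [NormedField 𝕜] {x y : 𝕜} {t : ℝ} (ht : 1 < t)
    (h : t * ‖x‖ ≤ ‖y‖) : ‖x / (x - y)‖ ≤ 1 / (t - 1) := by
  rcases eq_or_ne x 0 with rfl | hx
  · simpa using (one_div_pos.mpr (sub_pos.mpr ht)).le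
  have hx' : 0 < ‖x‖ := norm_pos_iff.mpr hx
  have hxy : (t - 1) * ‖x‖ ≤ ‖x - y‖ := by
    have := norm_sub_norm_le y x
    rw [norm_sub_rev] at this
    linarith
  rw [norm_div, div_le_div_iff₀ (lt_of_lt_of_le (by nlinarith) hxy) (sub_pos.mpr ht)]
  linarith

theorem exists_pow_mul_lt_le_pow_succ_mul {q s x : ℝ} (hq : 1 < q) (hs : 0 < s) (hx : s < x) :
    ∃ n : ℕ, q ^ n * s < x ∧ x ≤ q ^ (n + 1) * s := by
  have hex : ∃ n : ℕ, x ≤ q ^ (n + 1) * s := by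
    obtain ⟨n, hn⟩ := pow_unbounded_of_one_lt (x / s) hq
    refine ⟨n, ?_⟩
    rw [← div_le_iff₀ hs]
    exact hn.le.trans (pow_le_pow_right₀ hq.le n.le_succ)
  refine ⟨Nat.find hex, ?_, Nat.find_spec hex⟩
  rcases hn : Nat.find hex with _ | k
  · simpa using hx
  · simpa using Nat.find_min hex (hn ▸ k.lt_succ_self)

theorem exists_div_pow_succ_lt_le_div_pow {q s x : ℝ} (hq : 1 < q) (hx : 0 < x) (hxs : x ≤ s) :
    ∃ n : ℕ, s / q ^ (n + 1) < x ∧ x ≤ s / q ^ n := by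
  obtain ⟨n, hle, hlt⟩ := exists_nat_pow_near ((one_le_div hx).mpr hxs) hq
  have hq0 : 0 < q := one_pos.trans hq
  refine ⟨n, ?_, ?_⟩
  · rwa [div_lt_iff₀ hx, ← div_lt_iff₀' (by positivity)] at hlt
  · rwa [le_div_iff₀ hx, ← le_div_iff₀' (by positivity)] at hle

theorem sum_le_tsum_of_card_fiber_le {ι : Type*} {F : Finset ι} {g : ι → ℝ} {c : ℕ → ℝ}
    (hc : 0 ≤ c) (hcs : Summable c) (ν : ι → ℕ) {M : ℕ}
    (hg : ∀ j ∈ F, g j ≤ c (ν j)) (hfib : ∀ n, #{j ∈ F | ν j = n} ≤ M) :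
    ∑ j ∈ F, g j ≤ ∑' n, M * c n :=
  calc ∑ j ∈ F, g j ≤ ∑ j ∈ F, c (ν j) := sum_le_sum hg
    _ = ∑ n ∈ F.image ν, #{j ∈ F | ν j = n} • c n := sum_comp c ν
    _ ≤ ∑ n ∈ F.image ν, M * c n := sum_le_sum fun n _ => by
        rw [nsmul_eq_mul]
        exact mul_le_mul_of_nonneg_right (by exact_mod_cast hfib n) (hc n)
    _ ≤ ∑' n, M * c n :=
        (hcs.mul_left (M : ℝ)).sum_le_tsum _ fun n _ => mul_nonneg (Nat.cast_nonneg M) (hc n)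

section Annuli

variable {f : ℕ → ℝ} {K : ℝ} {N : ℕ}

theorem card_le_of_forall_mem_Ioc_mul (hf : Monotone f) (hK : 0 < K)
    (hgrow : ∀ n, K * f n ≤ f (n + N)) {s : ℝ} {F : Finset ℕ}
    (hF : ∀ j ∈ F, f j ∈ Set.Ioc s (K * s)) : #F ≤ N := by
  rcases F.eq_empty_or_nonempty with rfl | hne
  · simp
  set i := F.min' hne
  have hsub : F ⊆ Ico i (i + N) := fun j hj => by
    refine mem_Ico.mpr ⟨F.min'_le j hj, lt_of_not_ge fun hij => ?_⟩
    have hi := mul_lt_mul_of_pos_left (hF i (F.min'_mem hne)).1 hK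
    linarith [hgrow i, hf hij, (hF j hj).2]
  simpa using card_le_card hsub

theorem card_le_mul_of_forall_mem_Ioc_pow_mul (hf : Monotone f) (hK : 0 < K)
    (hgrow : ∀ n, K * f n ≤ f (n + N)) (m : ℕ) (s : ℝ) {F : Finset ℕ}
    (hF : ∀ j ∈ F, f j ∈ Set.Ioc s (K ^ m * s)) : #F ≤ m * N := by
  induction m generalizing F with
  | zero =>
    have hempty : F = ∅ := eq_empty_of_forall_notMem fun j hj => by
      have := hF j hj
      simp only [pow_zero, one_mul, Set.mem_Ioc] at this
      linarith
    simp [hempty]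
  | succ m ih =>
    classical
    rw [← card_filter_add_card_filter_not (s := F) (fun j => f j ≤ K ^ m * s), Nat.succ_mul]
    refine add_le_add (ih fun j hj => ?_)
      (card_le_of_forall_mem_Ioc_mul hf hK hgrow (s := K ^ m * s) fun j hj => ?_)
    · rw [mem_filter] at hj
      exact ⟨(hF j hj.1).1, hj.2⟩
    · rw [mem_filter] at hj
      refine ⟨not_le.mp hj.2, ?_⟩
      rw [← mul_assoc, ← pow_succ']
      exact (hF j hj.1).2

theorem sum_le_tsum_of_forall_mem_Ioc_pow_mul (hf : Monotone f) (hK : 0 < K)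
    (hgrow : ∀ n, K * f n ≤ f (n + N)) (m : ℕ) {s c : ℕ → ℝ} (hc : 0 ≤ c) (hcs : Summable c)
    {F : Finset ℕ} {g : ℕ → ℝ}
    (hg : ∀ j ∈ F, ∃ n, f j ∈ Set.Ioc (s n) (K ^ m * s n) ∧ g j ≤ c n) :
    ∑ j ∈ F, g j ≤ ∑' n, (m * N : ℕ) * c n := by
  choose! ν hν using hg
  refine sum_le_tsum_of_card_fiber_le hc hcs ν (fun j hj => (hν j hj).2) fun n => ?_
  refine card_le_mul_of_forall_mem_Ioc_pow_mul hf hK hgrow m (s n) fun j hj => ?_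
  rw [mem_filter] at hj
  exact hj.2 ▸ (hν j hj.1).1

theorem sum_le_tsum_four_mul_div_pow_sub_one (hf : Monotone f) (hK : 1 < K)
    (hgrow : ∀ n, K * f n ≤ f (n + N)) {s : ℕ → ℝ} {F : Finset ℕ} {g : ℕ → ℝ}
    (hg : ∀ j ∈ F, ∃ n, f j ∈ Set.Ioc (s n) (K ^ 4 * s n) ∧ g j ≤ 1 / (K ^ (4 * n + 1) - 1)) :
    ∑ j ∈ F, g j ≤ ∑' n : ℕ, 4 * (N : ℝ) / (K ^ (4 * n + 1) - 1) := by
  have hc : Summable fun n : ℕ => 1 / (K ^ (4 * n + 1) - 1) :=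
    (summable_one_div_pow_sub_one hK).comp_injective fun m n h => by omega
  simpa only [Nat.cast_mul, Nat.cast_ofNat, mul_one_div] using
    sum_le_tsum_of_forall_mem_Ioc_pow_mul hf (one_pos.trans hK) hgrow 4
      (fun n => one_div_nonneg.mpr (sub_nonneg.mpr (one_le_pow₀ hK.le))) hc hg

end Annuli

theorem tsum_ite_div_sub_sub_card_eq_sum {a : ℕ → ℂ} {z : ℂ} {p : ℕ → Prop} [DecidablePred p]
    (hfin : {j | p j}.Finite) (hz : ∀ j, p j → z ≠ a j) :
    (∑' j, if p j then z / (z - a j) else 0) - (Nat.card {j // p j} : ℂ) =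
      ∑ j ∈ hfin.toFinset, a j / (z - a j) := by
  have hmem (j : ℕ) : j ∈ hfin.toFinset ↔ p j := hfin.mem_toFinset
  rw [tsum_eq_sum (s := hfin.toFinset) fun j hj => if_neg (mt (hmem j).mpr hj),
    sum_ite_of_true fun j hj => (hmem j).mp hj, show Nat.card {j // p j} = #hfin.toFinset from
      Set.ncard_eq_toFinset_card _ hfin, cast_card, ← sum_sub_distrib]
  exact sum_congr rfl fun j hj => by
    rw [div_sub_one (sub_ne_zero.mpr (hz j ((hmem j).mp hj))), sub_sub_cancel]

section LogDerivative

variable {a : ℕ → ℂ} {K : ℝ} {N : ℕ} {r : ℝ} {z : ℂ}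

theorem norm_tsum_far_zeros_le (hK : 1 < K) (hmono : Monotone (‖a ·‖))
    (hgrow : ∀ n, K * ‖a n‖ ≤ ‖a (n + N)‖) (hr : 0 < r) (hz : ‖z‖ ≤ K * r) :
    ‖∑' j : ℕ, if K ^ 2 * r < ‖a j‖ then z / (z - a j) else 0‖
      ≤ ∑' n : ℕ, 4 * (N : ℝ) / (K ^ (4 * n + 1) - 1) := by
  classical
  set g : ℕ → ℂ := fun j => if K ^ 2 * r < ‖a j‖ then z / (z - a j) else 0
  have hpartial (F : Finset ℕ) :
      ∑ j ∈ F, ‖g j‖ ≤ ∑' n : ℕ, 4 * (N : ℝ) / (K ^ (4 * n + 1) - 1) := by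
    calc ∑ j ∈ F, ‖g j‖ = ∑ j ∈ F with K ^ 2 * r < ‖a j‖, ‖z / (z - a j)‖ := by
          rw [sum_filter]
          exact sum_congr rfl fun j _ => by split_ifs <;> simp [g, *]
      _ ≤ _ := sum_le_tsum_four_mul_div_pow_sub_one hmono hK hgrow
          (s := fun n => (K ^ 4) ^ n * (K ^ 2 * r)) fun j hj => ?_
    obtain ⟨n, hlow, hup⟩ := exists_pow_mul_lt_le_pow_succ_mul (one_lt_pow₀ hK four_ne_zero)
      (by positivity) (mem_filter.mp hj).2
    refine ⟨n, ⟨hlow, by rwa [pow_succ', mul_assoc] at hup⟩,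
      norm_div_sub_le (one_lt_pow₀ hK (Nat.succ_ne_zero _)) ?_⟩
    calc K ^ (4 * n + 1) * ‖z‖ ≤ K ^ (4 * n + 1) * (K * r) := by gcongr
      _ = (K ^ 4) ^ n * (K ^ 2 * r) := by ring
      _ ≤ ‖a j‖ := hlow.le
  have hsum : Summable (‖g ·‖) := summable_of_sum_le (fun _ => norm_nonneg _) hpartial
  exact (norm_tsum_le_tsum_norm hsum).trans (hsum.tsum_le_of_sum_le hpartial)

theorem norm_tsum_near_zeros_sub_card_le (hK : 1 < K) (hmono : Monotone (‖a ·‖))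
    (hgrow : ∀ n, K * ‖a n‖ ≤ ‖a (n + N)‖) (ha : ∀ n, a n ≠ 0)
    (htend : Tendsto (‖a ·‖) atTop atTop) (hr : 0 < r) (hz : r / K < ‖z‖) :
    ‖(∑' j : ℕ, if ‖a j‖ ≤ r / K ^ 2 then z / (z - a j) else 0) -
        (Nat.card {j : ℕ // ‖a j‖ ≤ r / K ^ 2} : ℂ)‖
      ≤ ∑' n : ℕ, 4 * (N : ℝ) / (K ^ (4 * n + 1) - 1) := by
  have hfin : {j | ‖a j‖ ≤ r / K ^ 2}.Finite := by
    have := htend.eventually_gt_atTop (r / K ^ 2)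
    rw [← Nat.cofinite_eq_atTop, eventually_cofinite] at this
    simpa using this
  have hmem (j : ℕ) : j ∈ hfin.toFinset ↔ ‖a j‖ ≤ r / K ^ 2 := hfin.mem_toFinset
  have hKr : r / K ^ 2 < r / K := div_lt_div_of_pos_left hr (one_pos.trans hK) (by nlinarith)
  rw [tsum_ite_div_sub_sub_card_eq_sum hfin fun j hj h => by linarith [h ▸ hz, hj.trans_lt hKr]]
  refine (norm_sum_le _ _).trans (sum_le_tsum_four_mul_div_pow_sub_one hmono hK hgrow
    (s := fun n => r / K ^ 2 / (K ^ 4) ^ (n + 1)) fun j hj => ?_)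
  obtain ⟨n, hlow, hup⟩ := exists_div_pow_succ_lt_le_div_pow (one_lt_pow₀ hK four_ne_zero)
    (norm_pos_iff.mpr (ha j)) ((hmem j).mp hj)
  refine ⟨n, ⟨hlow, hup.trans_eq ?_⟩, ?_⟩
  · field_simp
    ring
  rw [norm_div, norm_sub_rev, ← norm_div]
  refine norm_div_sub_le (one_lt_pow₀ hK (Nat.succ_ne_zero _)) ?_
  calc K ^ (4 * n + 1) * ‖a j‖ ≤ K ^ (4 * n + 1) * (r / K ^ 2 / (K ^ 4) ^ n) := by gcongr
    _ = r / K := by field_simp; ring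
    _ ≤ ‖z‖ := hz.le

end LogDerivative

/-- Estimates for the logarithmic derivative sums of a canonical product whose
zeros satisfy `|a_{n+N}| ≥ K|a_n|`: the contributions of the far-away zeros are
bounded by `∑ 4N/(K^{4n−3} − 1)`. -/
theorem log_derivative_sum_estimates (a : ℕ → ℂ) (K : ℝ) (N : ℕ) (hK : 1 < K)
    (h1 : ∀ n, 1 < ‖a n‖)
    (hmono : ∀ n, ‖a n‖ ≤ ‖a (n + 1)‖)
    (htend : Tendsto (fun n => ‖a n‖) atTop atTop)
    (hgrow : ∀ n, K * ‖a n‖ ≤ ‖a (n + N)‖)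
    (r : ℝ) (hr : 1 < r) (z : ℂ)
    (hz1 : r / K < ‖z‖) (hz2 : ‖z‖ ≤ K * r) :
    ‖∑' j : ℕ, if K ^ 2 * r < ‖a j‖ then z / (z - a j) else 0‖
      ≤ ∑' n : ℕ, 4 * (N : ℝ) / (K ^ (4 * n + 1) - 1) ∧
    ‖(∑' j : ℕ, if ‖a j‖ ≤ r / K ^ 2 then z / (z - a j) else 0) -
        (Nat.card {j : ℕ // ‖a j‖ ≤ r / K ^ 2} : ℂ)‖
      ≤ ∑' n : ℕ, 4 * (N : ℝ) / (K ^ (4 * n + 1) - 1) := by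
  have hmono' : Monotone (‖a ·‖) := monotone_nat_of_le_succ hmono
  have hr0 : 0 < r := one_pos.trans hr
  exact ⟨norm_tsum_far_zeros_le hK hmono' hgrow hr0 hz2,
    norm_tsum_near_zeros_sub_card_le hK hmono' hgrow
      (fun n => norm_pos_iff.mp (one_pos.trans (h1 n))) htend hr0 hz1⟩
end
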